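/- arXiv:1705.00212 — 2 statements merged into one kernel-verified Lean document; each statement's English description precedes it below -/
import Mathlib

section
/- Price of a path-dependent Arrow–Debreu security: fix a trajectory ω₀ ∈ Ω and let x₀ = x(ω₀). Every predictable self-financing trading strategy whose terminal wealth is the indicator payoff V ω = (if ω = ω₀ then 1 else 0) has initial wealth equal to q^(x₀) * (1−q)^(T − x₀) * (1+r)^(−T). -/
open Finset

/-- Stock price at time `t` in the `T`-step CRR binomial model. -/
def crrStock (T : ℕ) (S0 u d : ℝ) (t : ℕ) (ω : Fin T → Bool) : ℝ :=
  S0 * ∏ i ∈ Finset.univ.filter (fun i : Fin T => (i : ℕ) < t),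
    (if ω i then 1 + u else 1 + d)

/-- A trading strategy `(a, b)` is predictable if the holdings chosen at time `t`
depend only on the first `t` coordinates of the trajectory. -/
def crrPredictable {T : ℕ} (a b : Fin T → (Fin T → Bool) → ℝ) : Prop :=
  ∀ (t : Fin T) (ω ω' : Fin T → Bool),
    (∀ i : Fin T, (i : ℕ) < (t : ℕ) → ω i = ω' i) →
      a t ω = a t ω' ∧ b t ω = b t ω'

/-- Self-financing condition for the strategy `(a, b)`. -/
def crrSelfFinancing {T : ℕ} (S0 u d r : ℝ) (a b : Fin T → (Fin T → Bool) → ℝ) : Prop :=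
  ∀ (t : ℕ) (ht : t + 1 < T) (ω : Fin T → Bool),
    a ⟨t, by omega⟩ ω * crrStock T S0 u d (t + 1) ω + b ⟨t, by omega⟩ ω * (1 + r) ^ (t + 1)
      = a ⟨t + 1, ht⟩ ω * crrStock T S0 u d (t + 1) ω + b ⟨t + 1, ht⟩ ω * (1 + r) ^ (t + 1)

/-- Initial wealth of the strategy `(a, b)`. -/
def crrInitialWealth {T : ℕ} (hT : 0 < T) (S0 : ℝ) (a b : Fin T → (Fin T → Bool) → ℝ)
    (ω : Fin T → Bool) : ℝ :=
  a ⟨0, hT⟩ ω * S0 + b ⟨0, hT⟩ ω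

/-- Terminal wealth of the strategy `(a, b)`. -/
def crrTerminalWealth {T : ℕ} (hT : 0 < T) (S0 u d r : ℝ)
    (a b : Fin T → (Fin T → Bool) → ℝ) (ω : Fin T → Bool) : ℝ :=
  a ⟨T - 1, by omega⟩ ω * crrStock T S0 u d T ω + b ⟨T - 1, by omega⟩ ω * (1 + r) ^ T

/-- Number of up-moves in the trajectory `ω`. -/
def crrUps {T : ℕ} (ω : Fin T → Bool) : ℕ :=
  (Finset.univ.filter (fun i : Fin T => ω i = true)).card

/-- Wealth process: at time `t < T` the value of holdings chosen at `t`;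
at `t ≥ T` the terminal wealth. -/
def crrWf {T : ℕ} (hT : 0 < T) (S0 u d r : ℝ) (a b : Fin T → (Fin T → Bool) → ℝ)
    (t : ℕ) (ω : Fin T → Bool) : ℝ :=
  if h : t < T then
    a ⟨t, h⟩ ω * crrStock T S0 u d t ω + b ⟨t, h⟩ ω * (1 + r) ^ t
  else crrTerminalWealth hT S0 u d r a b ω

lemma crrStock_succ {T : ℕ} (S0 u d : ℝ) (t : ℕ) (ht : t < T) (ω : Fin T → Bool) :
    crrStock T S0 u d (t + 1) ω
      = crrStock T S0 u d t ω * (if ω ⟨t, ht⟩ then 1 + u else 1 + d) := by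
  unfold crrStock
  rw [mul_assoc]
  congr 1
  have hins : Finset.univ.filter (fun i : Fin T => (i : ℕ) < t + 1)
      = insert ⟨t, ht⟩ (Finset.univ.filter (fun i : Fin T => (i : ℕ) < t)) := by
    ext i
    simp [Fin.ext_iff]
    omega
  rw [hins, Finset.prod_insert (by simp), mul_comm]

lemma crrStock_congr {T : ℕ} (S0 u d : ℝ) (t : ℕ) (ω ω' : Fin T → Bool)
    (h : ∀ i : Fin T, (i : ℕ) < t → ω i = ω' i) :
    crrStock T S0 u d t ω = crrStock T S0 u d t ω' := by
  unfold crrStock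
  congr 1
  refine Finset.prod_congr rfl fun i hi => ?_
  simp only [Finset.mem_filter] at hi
  rw [h i hi.2]

lemma crr_one_step {T : ℕ} (hT : 0 < T) (S0 u d r : ℝ)
    (hd : -1 < d) (hdr : d < r) (hru : r < u)
    (a b : Fin T → (Fin T → Bool) → ℝ)
    (hpred : crrPredictable a b) (hsf : crrSelfFinancing S0 u d r a b)
    (t : ℕ) (ht : t < T) (ω : Fin T → Bool) :
    (1 + r) * crrWf hT S0 u d r a b t ω
      = (r - d) / (u - d)
          * crrWf hT S0 u d r a b (t + 1) (Function.update ω ⟨t, ht⟩ true)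
        + (1 - (r - d) / (u - d))
          * crrWf hT S0 u d r a b (t + 1) (Function.update ω ⟨t, ht⟩ false) := by
  have hud : u - d ≠ 0 := by linarith
  -- the value at time t+1 on the updated path
  have hval : ∀ x : Bool,
      crrWf hT S0 u d r a b (t + 1) (Function.update ω ⟨t, ht⟩ x)
        = a ⟨t, ht⟩ ω * crrStock T S0 u d t ω * (if x then 1 + u else 1 + d)
          + b ⟨t, ht⟩ ω * (1 + r) ^ (t + 1) := by
    intro x
    set ω' := Function.update ω ⟨t, ht⟩ x with hω'
    have hagree : ∀ i : Fin T, (i : ℕ) < t → ω' i = ω i := by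
      intro i hi
      apply Function.update_of_ne
      simp [Fin.ext_iff]; omega
    have hstock : crrStock T S0 u d (t + 1) ω'
        = crrStock T S0 u d t ω * (if x then 1 + u else 1 + d) := by
      rw [crrStock_succ S0 u d t ht ω', crrStock_congr S0 u d t ω' ω hagree,
        show ω' ⟨t, ht⟩ = x from by simp [hω']]
    have ha : a ⟨t, ht⟩ ω' = a ⟨t, ht⟩ ω := (hpred ⟨t, ht⟩ ω' ω hagree).1
    have hb : b ⟨t, ht⟩ ω' = b ⟨t, ht⟩ ω := (hpred ⟨t, ht⟩ ω' ω hagree).2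
    by_cases h1 : t + 1 < T
    · have hsf' := hsf t h1 ω'
      rw [crrWf, dif_pos h1, ← hsf', hstock, ha, hb]; ring
    · have hTt : T = t + 1 := by omega
      rw [crrWf, dif_neg h1, crrTerminalWealth]
      have hT1 : T - 1 = t := by omega
      have : (⟨T - 1, by omega⟩ : Fin T) = ⟨t, ht⟩ := by simp [Fin.ext_iff, hT1]
      have hstq : crrStock T S0 u d T ω' = crrStock T S0 u d (t + 1) ω' := by
        unfold crrStock
        congr 1
        have hfe : (Finset.univ.filter (fun i : Fin T => (i : ℕ) < T))
            = Finset.univ.filter (fun i : Fin T => (i : ℕ) < t + 1) := by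
          ext i
          simp only [Finset.mem_filter, Finset.mem_univ, true_and]
          have := i.isLt
          omega
        rw [hfe]
      rw [this, ha, hb, hstq, hstock,
        show ((1 + r) : ℝ) ^ T = (1 + r) ^ (t + 1) from by rw [hTt]]
      ring
  rw [hval true, hval false, crrWf, dif_pos ht]
  have key : (r - d) / (u - d) * (1 + u) + (1 - (r - d) / (u - d)) * (1 + d) = 1 + r := by
    field_simp
    ring
  have : (1 + r) ^ (t + 1) = (1 + r) * (1 + r) ^ t := by ring
  rw [if_pos rfl, if_neg (by simp), this]
  field_simp
  ring

/-- the price of a path-dependent Arrow–Debreu security paying 1 on the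
trajectory `ω₀` (and 0 otherwise) is `q^(x₀) * (1-q)^(T-x₀) * (1+r)^(-T)`. -/
theorem crr_arrow_debreu_price
    (T : ℕ) (hT : 0 < T) (S0 u d r : ℝ) (hS0 : 0 < S0)
    (hd : -1 < d) (hdr : d < r) (hru : r < u)
    (ω₀ : Fin T → Bool)
    (a b : Fin T → (Fin T → Bool) → ℝ)
    (hpred : crrPredictable a b) (hsf : crrSelfFinancing S0 u d r a b)
    (hterm : ∀ ω, crrTerminalWealth hT S0 u d r a b ω = if ω = ω₀ then 1 else 0) :
    ∀ ω, crrInitialWealth hT S0 a b ω =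
      ((r - d) / (u - d)) ^ crrUps ω₀
        * (1 - (r - d) / (u - d)) ^ (T - crrUps ω₀)
        * (1 + r) ^ (-(T : ℤ)) := by
  intro ω
  set q : ℝ := (r - d) / (u - d) with hqdef
  have hr1 : (0:ℝ) < 1 + r := by linarith
  have key : ∀ n t, t + n = T → ∀ ω : Fin T → Bool,
      crrWf hT S0 u d r a b t ω * (1 + r) ^ n
        = if (∀ i : Fin T, (i : ℕ) < t → ω i = ω₀ i) then
            ∏ i ∈ Finset.univ.filter (fun i : Fin T => t ≤ (i : ℕ)),
              (if ω₀ i then q else 1 - q)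
          else 0 := by
    intro n
    induction n with
    | zero =>
      intro t htn ω
      have h1 : ¬ (t < T) := by omega
      rw [crrWf, dif_neg h1, hterm]
      have hflt : Finset.univ.filter (fun i : Fin T => t ≤ (i : ℕ)) = ∅ := by
        refine Finset.eq_empty_of_forall_notMem fun i hi => ?_
        simp only [Finset.mem_filter, Finset.mem_univ, true_and] at hi
        have := i.isLt
        omega
      have hcond : (ω = ω₀) ↔ (∀ i : Fin T, (i : ℕ) < t → ω i = ω₀ i) := by
        constructor
        · intro h i _; rw [h]
        · intro h; funext i; exact h i (by have := i.isLt; omega)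
      rw [hflt, Finset.prod_empty]
      by_cases h : ω = ω₀
      · rw [if_pos h, if_pos (hcond.1 h), pow_zero, mul_one]
      · rw [if_neg h, if_neg (fun hc => h (hcond.2 hc)), pow_zero, mul_one]
    | succ n ih =>
      intro t htn ω
      have ht : t < T := by omega
      have hstep := crr_one_step hT S0 u d r hd hdr hru a b hpred hsf t ht ω
      have ihT := ih (t + 1) (by omega) (Function.update ω ⟨t, ht⟩ true)
      have ihF := ih (t + 1) (by omega) (Function.update ω ⟨t, ht⟩ false)
      have expand : crrWf hT S0 u d r a b t ω * (1 + r) ^ (n + 1)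
          = q * (crrWf hT S0 u d r a b (t + 1) (Function.update ω ⟨t, ht⟩ true) * (1 + r) ^ n)
            + (1 - q) * (crrWf hT S0 u d r a b (t + 1) (Function.update ω ⟨t, ht⟩ false)
                * (1 + r) ^ n) := by
        have : crrWf hT S0 u d r a b t ω * (1 + r) ^ (n + 1)
            = ((1 + r) * crrWf hT S0 u d r a b t ω) * (1 + r) ^ n := by ring
        rw [this, hstep]; ring
      rw [expand, ihT, ihF]
      -- condition equivalences
      have hcondx : ∀ x : Bool,
          (∀ i : Fin T, (i : ℕ) < t + 1 → Function.update ω ⟨t, ht⟩ x i = ω₀ i)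
            ↔ ((∀ i : Fin T, (i : ℕ) < t → ω i = ω₀ i) ∧ ω₀ ⟨t, ht⟩ = x) := by
        intro x
        constructor
        · intro h
          constructor
          · intro i hi
            have := h i (by omega)
            rwa [Function.update_of_ne (by simp [Fin.ext_iff]; omega)] at this
          · have := h ⟨t, ht⟩ (by simp)
            rw [Function.update_self] at this
            exact this.symm
        · rintro ⟨h1, h2⟩ i hi
          by_cases hit : (i : ℕ) < t
          · rw [Function.update_of_ne (by simp [Fin.ext_iff]; omega)]
            exact h1 i hit
          · have : i = ⟨t, ht⟩ := by simp [Fin.ext_iff]; omega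
            rw [this, Function.update_self, h2]
      have hprodsplit :
          (∏ i ∈ Finset.univ.filter (fun i : Fin T => t ≤ (i : ℕ)),
              (if ω₀ i then q else 1 - q))
            = (if ω₀ ⟨t, ht⟩ then q else 1 - q)
              * ∏ i ∈ Finset.univ.filter (fun i : Fin T => t + 1 ≤ (i : ℕ)),
                  (if ω₀ i then q else 1 - q) := by
        have hins : Finset.univ.filter (fun i : Fin T => t ≤ (i : ℕ))
            = insert ⟨t, ht⟩ (Finset.univ.filter (fun i : Fin T => t + 1 ≤ (i : ℕ))) := by
          ext i; simp [Fin.ext_iff]; omega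
        rw [hins, Finset.prod_insert (by simp)]
      rw [hprodsplit]
      by_cases hC : ∀ i : Fin T, (i : ℕ) < t → ω i = ω₀ i
      · cases hb : ω₀ ⟨t, ht⟩ with
        | true =>
          rw [if_pos ((hcondx true).2 ⟨hC, hb⟩),
            if_neg (fun h => by simpa [hb] using ((hcondx false).1 h).2),
            if_pos hC, if_pos rfl]
          ring
        | false =>
          rw [if_neg (fun h => by simpa [hb] using ((hcondx true).1 h).2),
            if_pos ((hcondx false).2 ⟨hC, hb⟩), if_pos hC, if_neg (by simp)]
          ring
      · rw [if_neg (fun h => hC ((hcondx true).1 h).1),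
          if_neg (fun h => hC ((hcondx false).1 h).1), if_neg hC]
        ring
  have h0 := key T 0 (by omega) ω
  have hW0 : crrWf hT S0 u d r a b 0 ω = crrInitialWealth hT S0 a b ω := by
    rw [crrWf, dif_pos hT, crrInitialWealth, crrStock]
    have : Finset.univ.filter (fun i : Fin T => (i : ℕ) < 0) = ∅ := by ext i; simp
    rw [this, Finset.prod_empty, mul_one, pow_zero, mul_one]
  rw [hW0, if_pos (fun i hi => absurd hi (by omega))] at h0
  have hfilt : Finset.univ.filter (fun i : Fin T => 0 ≤ (i : ℕ)) = Finset.univ := by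
    ext i; simp
  rw [hfilt] at h0
  have hprod : (∏ i : Fin T, (if ω₀ i then q else 1 - q))
      = q ^ crrUps ω₀ * (1 - q) ^ (T - crrUps ω₀) := by
    rw [Finset.prod_ite, Finset.prod_const, Finset.prod_const]
    have h1 : (Finset.univ.filter (fun i : Fin T => ω₀ i = true)).card = crrUps ω₀ := rfl
    have h2 : (Finset.univ.filter (fun i : Fin T => ¬ ω₀ i = true)).card = T - crrUps ω₀ := by
      have h3 := Finset.card_filter_add_card_filter_not
        (s := (Finset.univ : Finset (Fin T))) (p := fun i : Fin T => ω₀ i = true)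
      simp only [Finset.card_univ, Fintype.card_fin] at h3
      unfold crrUps
      omega
    rw [h1, h2]
  rw [hprod] at h0
  have hpow : ((1 + r) : ℝ) ^ (-(T : ℤ)) = ((1 + r) ^ T)⁻¹ := by
    rw [zpow_neg, zpow_natCast]
  rw [hpow]
  have hne : ((1 + r) : ℝ) ^ T ≠ 0 := by positivity
  field_simp
  linarith [h0]
end

section
/- Vanishing drift sensitivity as the time step shrinks: for fixed reals μ, r and σ > 0, the function h ↦ (h * exp(r*h)) / ((exp(μ*h + σ*Real.sqrt h) − exp(μ*h − σ*Real.sqrt h)) * Real.sqrt h) tends to 1/(2*σ) as h → 0 from the right (Filter.Tendsto along 𝓝[>] 0 to 𝓝 (1/(2*σ))). Equivalently, the drift sensitivity −∂q/∂μ = h*exp(r*h)/(exp(μ*h+σ*√h) − exp(μ*h−σ*√h)) of the one-step risk-neutral probability is asymptotic to √h/(2σ) as h → 0⁺, so the effect of the drift μ on the risk-neutral probabilities vanishes in the Black–Scholes–Merton limit. -/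
/-! Since `exp (μh + σ√h) - exp (μh - σ√h) = 2 exp (μh) sinh (σ√h)` and `h = √h · √h`, the
quantity equals `exp ((r - μ)h) · (√h / sinh (σ√h)) / 2`. The first factor tends to `1`, and
`x / sinh (σx) → 1/σ` as `x → 0` because `sinh (σx)` has derivative `σ` at `0`. -/

open Real Filter Topology

theorem Real.tendsto_div_sinh_const_mul {σ : ℝ} (hσ : σ ≠ 0) :
    Tendsto (fun x => x / sinh (σ * x)) (𝓝[≠] 0) (𝓝 σ⁻¹) := by
  have hderiv : HasDerivAt (fun x => sinh (σ * x)) σ 0 := by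
    simpa using ((hasDerivAt_id (0 : ℝ)).const_mul σ).sinh
  refine ((hasDerivAt_iff_tendsto_slope.mp hderiv).inv₀ hσ).congr fun x => ?_
  simp [slope_def_field]

theorem Real.tendsto_sqrt_nhdsGT_zero : Tendsto sqrt (𝓝[>] 0) (𝓝[>] 0) :=
  tendsto_nhdsWithin_of_tendsto_nhds_of_eventually_within _
    (by simpa using continuous_sqrt.continuousWithinAt.tendsto (x := 0) (s := Set.Ioi 0))
    (eventually_nhdsWithin_of_forall fun _ hx => sqrt_pos.mpr hx)

theorem Real.exp_add_sub_exp_sub (a b : ℝ) : exp (a + b) - exp (a - b) = 2 * exp a * sinh b := by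
  rw [sinh_eq, exp_add, exp_sub, exp_neg]
  field_simp

/-- vanishing drift sensitivity as the time step shrinks: the drift
sensitivity `h * exp(r h) / (U h - D h)` of the one-step risk-neutral probability,
normalized by `√h`, tends to `1/(2σ)` as `h → 0⁺`; i.e. it is asymptotic to
`√h/(2σ)`, so the effect of the drift `μ` vanishes in the BSM limit. -/
theorem drift_sensitivity_vanishes
    (μ r σ : ℝ) (hσ : 0 < σ) :
    Filter.Tendsto
      (fun h : ℝ =>
        (h * Real.exp (r * h)) /
          ((Real.exp (μ * h + σ * Real.sqrt h) - Real.exp (μ * h - σ * Real.sqrt h))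
            * Real.sqrt h))
      (nhdsWithin 0 (Set.Ioi 0)) (nhds (1 / (2 * σ))) := by
  have hsinh : Tendsto (fun h => √h / sinh (σ * √h)) (𝓝[>] 0) (𝓝 σ⁻¹) :=
    (tendsto_div_sinh_const_mul hσ.ne').comp
      (tendsto_sqrt_nhdsGT_zero.mono_right (nhdsWithin_mono 0 fun _ hx => ne_of_gt hx))
  have hexp : Tendsto (fun h => exp ((r - μ) * h)) (𝓝[>] 0) (𝓝 1) := by
    simpa using ((continuous_const.mul continuous_id).rexp.tendsto 0).mono_left nhdsWithin_le_nhds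
  have hlim : Tendsto (fun h => exp ((r - μ) * h) * (√h / sinh (σ * √h)) / 2) (𝓝[>] 0)
      (𝓝 (1 / (2 * σ))) := by
    convert (hexp.mul hsinh).div_const 2 using 2
    field_simp
  refine hlim.congr' (eventually_nhdsWithin_of_forall fun h (hh : 0 < h) => ?_)
  have hsqrt : 0 < √h := sqrt_pos.mpr hh
  have hsinh_pos : 0 < sinh (σ * √h) := sinh_pos_iff.mpr (mul_pos hσ hsqrt)
  dsimp only
  rw [exp_add_sub_exp_sub, sub_mul, exp_sub]
  field_simp
  exact sq_sqrt hh.le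
end
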